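/- arXiv:2009.00533 — 5 statements merged into one kernel-verified Lean document; each statement's English description precedes it below -/
import Mathlib

section
/- Let f : A → B be a homomorphism of abelian groups whose kernel and cokernel both have finite exponent. Then for any abelian group C, the homomorphism f ⊗ id_C : A ⊗ C → B ⊗ C also has kernel and cokernel of finite exponent. -/
/-!
Factor `f` as `A ↠ A ⧸ ker f ↪ B`. Tensoring the surjection with `C` has kernel the image of
`ker f ⊗ C`, which is killed by the exponent `m` of `ker f`. If `n` kills `coker f`, the
injection `f̄ : A ⧸ ker f → B` has a quasi-inverse `g` with `g ∘ f̄ = n`, which survives tensoring,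
so `n` kills the kernel of `f̄ ⊗ C`; hence `m n` kills `ker (f ⊗ C)`. By right exactness,
`coker (f ⊗ C) ≅ coker f ⊗ C`, which is killed by `n`.
-/

open TensorProduct LinearMap Submodule

variable {R M N P : Type*} [CommRing R] [AddCommGroup M] [AddCommGroup N] [AddCommGroup P]
  [Module R M] [Module R N] [Module R P]

theorem Module.IsTorsionBy.rTensor {r : R} (h : Module.IsTorsionBy R M r) :
    Module.IsTorsionBy R (M ⊗[R] P) r := by
  intro x
  have hr : r • (LinearMap.id : M →ₗ[R] M) = 0 := LinearMap.ext fun m => @h m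
  simpa [rTensor_smul] using congr($(congrArg (LinearMap.rTensor P) hr) x)

namespace LinearMap

theorem ker_comp_le_torsionBy_mul {f : M →ₗ[R] N} {g : N →ₗ[R] P} {r s : R}
    (hf : ker f ≤ torsionBy R M r) (hg : ker g ≤ torsionBy R N s) :
    ker (g ∘ₗ f) ≤ torsionBy R M (r * s) := by
  intro x hx
  have hsx : s • f x = 0 := hg hx
  rw [mem_torsionBy_iff, mul_smul]
  exact hf (show f (s • x) = 0 by rw [map_smul, hsx])

theorem ker_le_torsionBy_of_comp_eq_smul_id {f : M →ₗ[R] N} {g : N →ₗ[R] M} {r : R}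
    (hgf : g ∘ₗ f = r • LinearMap.id) : ker f ≤ torsionBy R M r := by
  intro x hx
  calc r • x = (g ∘ₗ f) x := by rw [hgf]; rfl
    _ = 0 := by rw [comp_apply, mem_ker.mp hx, map_zero]

theorem exists_comp_eq_smul_id_of_injective {f : M →ₗ[R] N} (hf : Function.Injective f) {r : R}
    (hcoker : Module.IsTorsionBy R (N ⧸ range f) r) :
    ∃ g : N →ₗ[R] M, g ∘ₗ f = r • LinearMap.id := by
  have hr : ∀ y, r • y ∈ range f := (Module.isTorsionBy_quotient_iff _ r).mp hcoker
  refine ⟨(LinearEquiv.ofInjective f hf).symm.toLinearMap ∘ₗ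
    (r • LinearMap.id).codRestrict (range f) hr, ?_⟩
  ext x
  apply hf
  simp [LinearEquiv.ofInjective_symm_apply]

theorem ker_rTensor_mkQ_le_torsionBy {K : Submodule R M} {r : R} (hK : K ≤ torsionBy R M r) :
    ker (rTensor P K.mkQ) ≤ torsionBy R (M ⊗[R] P) r := by
  have hKr : Module.IsTorsionBy R K r := fun x => Subtype.ext (hK x.2)
  rw [rTensor_mkQ]
  rintro _ ⟨w, rfl⟩
  rw [mem_torsionBy_iff, ← map_smul, hKr.rTensor, map_zero]

theorem ker_rTensor_le_torsionBy_mul (f : M →ₗ[R] N) {m n : R}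
    (hker : ker f ≤ torsionBy R M m) (hcoker : Module.IsTorsionBy R (N ⧸ range f) n) :
    ker (rTensor P f) ≤ torsionBy R (M ⊗[R] P) (m * n) := by
  set f' := (ker f).liftQ f le_rfl
  have hf' : Function.Injective f' := ker_eq_bot.mp (ker_liftQ_eq_bot' _ f rfl)
  obtain ⟨g, hgf⟩ := exists_comp_eq_smul_id_of_injective hf' (r := n)
    (by rwa [range_liftQ])
  have hfactor : rTensor P f = rTensor P f' ∘ₗ rTensor P (ker f).mkQ := by
    rw [← rTensor_comp]; rfl
  rw [hfactor]
  refine ker_comp_le_torsionBy_mul (ker_rTensor_mkQ_le_torsionBy hker)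
    (ker_le_torsionBy_of_comp_eq_smul_id (g := rTensor P g) ?_)
  rw [← rTensor_comp, hgf, rTensor_smul, rTensor_id]

theorem isTorsionBy_coker_rTensor (f : M →ₗ[R] N) {r : R}
    (hcoker : Module.IsTorsionBy R (N ⧸ range f) r) :
    Module.IsTorsionBy R ((N ⊗[R] P) ⧸ range (rTensor P f)) r := by
  have hexact := _root_.rTensor_exact P f.exact_map_mkQ_range (range f).mkQ_surjective
  refine (Module.isTorsionBy_quotient_iff _ r).mpr fun y => ?_
  rw [← hexact.linearMap_ker_eq, mem_ker, map_smul]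
  exact hcoker.rTensor (P := P) (x := _)

end LinearMap

/-- If `f : A → B` has kernel and cokernel of finite exponent, then so does
`f ⊗ id_C : A ⊗ C → B ⊗ C` for every abelian group `C`. -/
theorem stmt_1 (A B C : Type) [AddCommGroup A] [AddCommGroup B] [AddCommGroup C]
    (f : A →ₗ[ℤ] B)
    (hker : ∃ n : ℕ, 0 < n ∧ ∀ a ∈ LinearMap.ker f, (n : ℤ) • a = 0)
    (hcoker : ∃ n : ℕ, 0 < n ∧ ∀ b : B ⧸ LinearMap.range f, (n : ℤ) • b = 0) :
    (∃ n : ℕ, 0 < n ∧ ∀ x ∈ LinearMap.ker (TensorProduct.map f (LinearMap.id (M := C))),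
        (n : ℤ) • x = 0) ∧
    (∃ n : ℕ, 0 < n ∧ ∀ y : (B ⊗[ℤ] C) ⧸
        LinearMap.range (TensorProduct.map f (LinearMap.id (M := C))),
        (n : ℤ) • y = 0) := by
  obtain ⟨m, hm, hmker⟩ := hker
  obtain ⟨n, hn, hncoker⟩ := hcoker
  have hcoker' : Module.IsTorsionBy ℤ (B ⧸ range f) n := fun y => hncoker y
  refine ⟨⟨m * n, Nat.mul_pos hm hn, fun x hx => ?_⟩,
    ⟨n, hn, isTorsionBy_coker_rTensor f hcoker'⟩⟩
  rw [Nat.cast_mul]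
  exact ker_rTensor_le_torsionBy_mul f hmker hcoker' hx
end

section
/- Let f : A → B be a homomorphism of abelian groups such that both Ker f and Coker f are killed by a positive integer n. Then there exists a homomorphism g : B → A such that g ∘ f = n²·id_A and f ∘ g = n²·id_B. -/
/-- If `Ker f` and `Coker f` are killed by `n > 0`, then there is `g : B → A` with
`g ∘ f = n² • id` and `f ∘ g = n² • id`. -/
theorem stmt_2 (A B : Type) [AddCommGroup A] [AddCommGroup B]
    (f : A →+ B) (n : ℕ) (hn : 0 < n)
    (hker : ∀ a : A, f a = 0 → (n : ℤ) • a = 0)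
    (hcoker : ∀ b : B ⧸ f.range, (n : ℤ) • b = 0) :
    ∃ g : B →+ A, (∀ a : A, g (f a) = ((n : ℤ) ^ 2) • a) ∧
      (∀ b : B, f (g b) = ((n : ℤ) ^ 2) • b) := by
  have hs : ∀ b : B, ∃ a : A, f a = (n : ℤ) • b := by
    intro b
    have h := hcoker (QuotientAddGroup.mk b)
    have h2 : ((n : ℤ) • b : B) ∈ f.range := by
      rwa [← QuotientAddGroup.mk_zsmul, QuotientAddGroup.eq_zero_iff] at h
    obtain ⟨a, ha⟩ := h2
    exact ⟨a, ha⟩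
  choose s hsp using hs
  -- key well-definedness: if f a = f a' then n • a = n • a'
  have key : ∀ a a' : A, f a = f a' → (n : ℤ) • a = (n : ℤ) • a' := by
    intro a a' h
    have : f (a - a') = 0 := by simp [map_sub, h]
    have := hker _ this
    rw [smul_sub, sub_eq_zero] at this
    exact this
  refine ⟨{ toFun := fun b => (n : ℤ) • s b,
            map_zero' := ?_,
            map_add' := ?_ }, ?_, ?_⟩
  · have : f (s 0) = f 0 := by simp [hsp 0]
    simpa using key _ _ this
  · intro b₁ b₂
    have : f (s (b₁ + b₂)) = f (s b₁ + s b₂) := by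
      simp [hsp, smul_add]
    simpa [smul_add] using key _ _ this
  · intro a
    have : f (s (f a)) = f ((n : ℤ) • a) := by
      simp [hsp]
    have h := key _ _ this
    simp only [AddMonoidHom.coe_mk, ZeroHom.coe_mk]
    rw [h, smul_smul, ← pow_two]
  · intro b
    simp only [AddMonoidHom.coe_mk, ZeroHom.coe_mk]
    rw [map_zsmul, hsp, smul_smul, ← pow_two]
end

section
/- Let A and B be abelian groups with B torsion-free. Then the natural map from the colimit over positive integers N (ordered by divisibility) of Hom(A, B), with transition maps given by multiplication, to Hom(A, B ⊗ ℚ), sending the class of (φ, N) to N⁻¹·φ, is injective, and its image consists exactly of those homomorphisms ψ : A → B ⊗ ℚ such that ψ(A) ⊆ N⁻¹·B for some positive integer N. -/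
open TensorProduct

lemma tmul_one_inj (B : Type) [AddCommGroup B]
    (hB : ∀ b : B, ∀ n : ℤ, n ≠ 0 → n • b = 0 → b = 0) :
    ∀ b b' : B, ((1 : ℚ) ⊗ₜ[ℤ] b : ℚ ⊗[ℤ] B) = (1 : ℚ) ⊗ₜ[ℤ] b' → b = b' := by
  have hloc : IsLocalizedModule (nonZeroDivisors ℤ) ((TensorProduct.mk ℤ ℚ B) 1) :=
    (isLocalizedModule_iff_isBaseChange (nonZeroDivisors ℤ) ℚ _).mpr
      (TensorProduct.isBaseChange ℤ B ℚ)
  intro b b' h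
  have h0 : ((TensorProduct.mk ℤ ℚ B) 1) (b - b') = 0 := by
    simp [TensorProduct.tmul_sub, h]
  obtain ⟨s, hs⟩ := (IsLocalizedModule.eq_zero_iff (nonZeroDivisors ℤ) _).mp h0
  have := hB (b - b') s (nonZeroDivisors.coe_ne_zero s) hs
  exact sub_eq_zero.mp this

lemma nat_smul_tmul (B : Type) [AddCommGroup B] (n : ℕ) (b : B) :
    ((n : ℚ)) • ((1 : ℚ) ⊗ₜ[ℤ] b : ℚ ⊗[ℤ] B) = (1 : ℚ) ⊗ₜ[ℤ] ((n : ℤ) • b) := by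
  rw [show ((n : ℚ)) = (((n : ℤ) : ℚ)) by push_cast; ring, Int.cast_smul_eq_zsmul,
    TensorProduct.smul_tmul', TensorProduct.smul_tmul]

/-- For `B` torsion-free, the map from the colimit over positive integers `N` (ordered by
divisibility) of `Hom(A,B)` to `Hom(A, B ⊗ ℚ)`, sending the class of `(φ, N)` to `N⁻¹ • φ`,
is injective (two pairs `(φ₁,N₁)`, `(φ₂,N₂)` with the same image are already equal in the
colimit, i.e. `N₂ • φ₁ = N₁ • φ₂`), and its image consists exactly of those `ψ : A → B ⊗ ℚ`
with `ψ(A) ⊆ N⁻¹ • B` for some `N > 0`. Here `B` is embedded in `ℚ ⊗[ℤ] B` via `b ↦ 1 ⊗ b`. -/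
theorem stmt_3 (A B : Type) [AddCommGroup A] [AddCommGroup B]
    (hB : ∀ b : B, ∀ n : ℤ, n ≠ 0 → n • b = 0 → b = 0) :
    -- injectivity of the colimit map
    (∀ (φ₁ φ₂ : A →+ B) (N₁ N₂ : ℕ), 0 < N₁ → 0 < N₂ →
      (∀ a : A, ((N₁ : ℚ)⁻¹ • ((1 : ℚ) ⊗ₜ[ℤ] (φ₁ a)) : ℚ ⊗[ℤ] B) =
        (N₂ : ℚ)⁻¹ • ((1 : ℚ) ⊗ₜ[ℤ] (φ₂ a))) →
      ∀ a : A, (N₂ : ℤ) • φ₁ a = (N₁ : ℤ) • φ₂ a) ∧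
    -- characterisation of the image
    (∀ ψ : A →+ ℚ ⊗[ℤ] B,
      ((∃ (N : ℕ) (φ : A →+ B), 0 < N ∧
          ∀ a : A, ψ a = (N : ℚ)⁻¹ • ((1 : ℚ) ⊗ₜ[ℤ] (φ a))) ↔
        (∃ N : ℕ, 0 < N ∧ ∀ a : A, ∃ b : B,
          ψ a = (N : ℚ)⁻¹ • ((1 : ℚ) ⊗ₜ[ℤ] b)))) := by
  constructor
  · intro φ₁ φ₂ N₁ N₂ hN₁ hN₂ h a
    have hN₁' : (N₁ : ℚ) ≠ 0 := Nat.cast_ne_zero.mpr hN₁.ne'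
    have hN₂' : (N₂ : ℚ) ≠ 0 := Nat.cast_ne_zero.mpr hN₂.ne'
    have e := congrArg (fun x : ℚ ⊗[ℤ] B => ((N₁ : ℚ) * (N₂ : ℚ)) • x) (h a)
    simp only [smul_smul] at e
    rw [show ((N₁ : ℚ) * (N₂ : ℚ)) * (N₁ : ℚ)⁻¹ = (N₂ : ℚ) by field_simp,
      show ((N₁ : ℚ) * (N₂ : ℚ)) * (N₂ : ℚ)⁻¹ = (N₁ : ℚ) by field_simp,
      nat_smul_tmul, nat_smul_tmul] at e
    exact tmul_one_inj B hB _ _ e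
  · intro ψ
    constructor
    · rintro ⟨N, φ, hN, hψ⟩
      exact ⟨N, hN, fun a => ⟨φ a, hψ a⟩⟩
    · rintro ⟨N, hN, hb⟩
      choose g hg using hb
      have hN' : ((N : ℚ)⁻¹ : ℚ) ≠ 0 := inv_ne_zero (Nat.cast_ne_zero.mpr hN.ne')
      have hadd : ∀ a a' : A, g (a + a') = g a + g a' := by
        intro a a'
        have e : (N : ℚ)⁻¹ • ((1 : ℚ) ⊗ₜ[ℤ] (g (a + a')) : ℚ ⊗[ℤ] B) =
            (N : ℚ)⁻¹ • ((1 : ℚ) ⊗ₜ[ℤ] (g a + g a')) := by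
          rw [← hg, map_add, hg, hg, TensorProduct.tmul_add, smul_add]
        exact tmul_one_inj B hB _ _ (smul_right_injective (ℚ ⊗[ℤ] B) hN' e)
      exact ⟨N, AddMonoidHom.mk' g hadd, hN, hg⟩
end

section
/- Let A and B be abelian groups, and suppose there exist homomorphisms f : A → B and g : B → A with g ∘ f = n·id_A for some positive integer n. If B is finitely generated, then A is an extension of a finitely generated abelian group by a group of finite exponent; that is, there is a subgroup T ⊆ A of finite exponent with A/T finitely generated. -/
/-!
Take `T = ker f`: it is killed by `n`, since `n • t = g (f t) = 0`. And `A ⧸ ker f ≅ range f`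
is a subgroup of the finitely generated abelian group `B`, hence finitely generated because `ℤ`
is Noetherian.
-/

theorem AddSubgroup.fg_of_addGroup_fg {B : Type*} [AddCommGroup B] [AddGroup.FG B]
    (H : AddSubgroup B) : H.FG := by
  have : Module.Finite ℤ B := Module.Finite.iff_addGroup_fg.mpr ‹_›
  rw [← AddSubgroup.toIntSubmodule_toAddSubgroup H, ← Submodule.fg_iff_addSubgroup_fg]
  exact IsNoetherian.noetherian _

theorem AddMonoidHom.fg_quotient_ker {A B : Type*} [AddCommGroup A] [AddCommGroup B]
    [AddGroup.FG B] (f : A →+ B) : AddGroup.FG (A ⧸ f.ker) := by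
  have : AddGroup.FG f.range := (AddGroup.fg_iff_addSubgroup_fg _).mpr f.range.fg_of_addGroup_fg
  let e := (QuotientAddGroup.quotientKerEquivRange f).symm
  exact AddGroup.fg_of_surjective (f := e.toAddMonoidHom) e.surjective

theorem AddMonoidHom.zsmul_eq_zero_of_mem_ker {A B : Type*} [AddCommGroup A] [AddCommGroup B]
    {f : A →+ B} {g : B →+ A} {k : ℤ} (hgf : ∀ a, g (f a) = k • a) {t : A}
    (ht : t ∈ f.ker) : k • t = 0 := by
  rw [← hgf t, f.mem_ker.mp ht, map_zero]

/-- If `g ∘ f = n • id_A` with `n > 0` and `B` is finitely generated, then `A` is an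
extension of a finitely generated abelian group by a group of finite exponent. -/
theorem stmt_5 (A B : Type) [AddCommGroup A] [AddCommGroup B]
    (f : A →+ B) (g : B →+ A) (n : ℕ) (hn : 0 < n)
    (hgf : ∀ a : A, g (f a) = (n : ℤ) • a)
    (hB : AddGroup.FG B) :
    ∃ T : AddSubgroup A, (∃ m : ℕ, 0 < m ∧ ∀ t ∈ T, (m : ℤ) • t = 0) ∧
      AddGroup.FG (A ⧸ T) :=
  ⟨f.ker, ⟨n, hn, fun _ ↦ AddMonoidHom.zsmul_eq_zero_of_mem_ker hgf⟩, f.fg_quotient_ker⟩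
end

section
/- Let f : A → B and g : B → A be homomorphisms of abelian groups with g ∘ f = m·id_A for a positive integer m. Let H_B ⊆ B be a subgroup with B/H_B torsion-free, and define H_A = f⁻¹(H_B). Then A/H_A is torsion-free, and A/H_A embeds into B/H_B; in particular, if B/H_B is finitely generated free, so is A/H_A. -/
/-- If `g ∘ f = m • id_A` (`m > 0`), `H_B ⊆ B` has torsion-free quotient and
`H_A = f⁻¹(H_B)`, then `A/H_A` is torsion-free and embeds into `B/H_B`; in particular,
if `B/H_B` is finitely generated free, so is `A/H_A`. -/
theorem stmt_16 (A B : Type) [AddCommGroup A] [AddCommGroup B]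
    (f : A →+ B) (g : B →+ A) (m : ℕ) (hm : 0 < m)
    (hgf : ∀ a : A, g (f a) = (m : ℤ) • a)
    (HB : AddSubgroup B)
    (htf : ∀ y : B ⧸ HB, (∃ n : ℕ, 0 < n ∧ (n : ℤ) • y = 0) → y = 0) :
    (∀ x : A ⧸ HB.comap f, (∃ n : ℕ, 0 < n ∧ (n : ℤ) • x = 0) → x = 0) ∧
    (∃ ι : A ⧸ HB.comap f →+ B ⧸ HB, Function.Injective ι ∧
      ∀ a : A, ι (QuotientAddGroup.mk a) = QuotientAddGroup.mk (f a)) ∧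
    (AddGroup.FG (B ⧸ HB) → Module.Free ℤ (B ⧸ HB) →
      AddGroup.FG (A ⧸ HB.comap f) ∧ Module.Free ℤ (A ⧸ HB.comap f)) := by
  -- the induced map
  have hsub : HB.comap f ≤ AddSubgroup.comap f HB := le_rfl
  set ι : A ⧸ HB.comap f →+ B ⧸ HB :=
    QuotientAddGroup.map _ _ f hsub with hι
  have hιmk : ∀ a : A, ι (QuotientAddGroup.mk a) = QuotientAddGroup.mk (f a) := by
    intro a; rfl
  have hinj : Function.Injective ι := by
    rw [injective_iff_map_eq_zero]
    intro x hx
    obtain ⟨a, rfl⟩ := QuotientAddGroup.mk_surjective x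
    rw [hιmk] at hx
    have : f a ∈ HB := (QuotientAddGroup.eq_zero_iff _).mp hx
    exact (QuotientAddGroup.eq_zero_iff _).mpr this
  have htfA : ∀ x : A ⧸ HB.comap f, (∃ n : ℕ, 0 < n ∧ (n : ℤ) • x = 0) → x = 0 := by
    intro x ⟨n, hn, hnx⟩
    apply hinj
    rw [map_zero]
    apply htf
    exact ⟨n, hn, by rw [← map_zsmul, hnx, map_zero]⟩
  refine ⟨htfA, ⟨ι, hinj, hιmk⟩, fun hfg hfree => ?_⟩
  have hfinB : Module.Finite ℤ (B ⧸ HB) := Module.Finite.iff_addGroup_fg.mpr hfg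
  have hnoeth : IsNoetherian ℤ (B ⧸ HB) :=
    isNoetherian_of_isNoetherianRing_of_finite ℤ (B ⧸ HB)
  have hnoethA : IsNoetherian ℤ (A ⧸ HB.comap f) :=
    isNoetherian_of_injective ι.toIntLinearMap hinj
  have hfinA : Module.Finite ℤ (A ⧸ HB.comap f) :=
    ⟨IsNoetherian.noetherian ⊤⟩
  have hnz : NoZeroSMulDivisors ℤ (A ⧸ HB.comap f) := by
    constructor
    intro c x hcx
    by_cases hc : c = 0
    · exact Or.inl hc
    · refine Or.inr (htfA x ⟨c.natAbs, Int.natAbs_pos.mpr hc, ?_⟩)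
      rcases Int.natAbs_eq c with h | h
      · rw [← h, hcx]
      · rw [show ((c.natAbs : ℤ)) = -c by omega, neg_smul, hcx, neg_zero]
  exact ⟨Module.Finite.iff_addGroup_fg.mp hfinA, Module.free_of_finite_type_torsion_free'⟩
end
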